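/- (Shimizu's lemma) Let Γ be a discrete subgroup of SL(2,ℂ) containing the parabolic matrix A = [[1,1],[0,1]]. If B = [[a,b],[c,d]] ∈ Γ with c ≠ 0, then |c| ≥ 1. -/

import Mathlib

open Matrix

/-- Topology on `SL(2,ℂ)` induced from the (entrywise) topology on matrices. -/
noncomputable instance : TopologicalSpace (Matrix.SpecialLinearGroup (Fin 2) ℂ) :=
  TopologicalSpace.induced (fun g => (g : Matrix (Fin 2) (Fin 2) ℂ)) inferInstance

/-- The parabolic matrix `[[1,1],[0,1]]` in `SL(2,ℂ)`. -/
def shimizuA : Matrix.SpecialLinearGroup (Fin 2) ℂ :=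
  ⟨!![1, 1; 0, 1], by norm_num [Matrix.det_fin_two_of]⟩

/-
Shimizu's argument: put `B₀ = B` and `Bₙ₊₁ = Bₙ A Bₙ⁻¹`. Writing `aₙ, cₙ` for the left column of
`Bₙ`, one computes `Bₙ₊₁ = [[1 - aₙcₙ, aₙ²], [-cₙ², 1 + aₙcₙ]]`, so `|cₙ| = |c|^(2ⁿ)`. If
`0 < |c| < 1`, then `cₙ → 0` without ever vanishing, `aₙ₊₁ = 1 - aₙcₙ` stays bounded and hence
tends to `1`, so `Bₙ₊₁ → A`. These are elements of `Γ` different from `A`, contradicting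
discreteness.
-/

open scoped MatrixGroups
open Filter Topology

lemma Filter.Tendsto.eventually_eq_of_discreteTopology {X ι : Type*} [TopologicalSpace X]
    {p : X → Prop} [DiscreteTopology (Subtype p)] {l : Filter ι} {u : ι → X} {x : X}
    (hu : ∀ i, p (u i)) (hx : p x) (h : Tendsto u l (𝓝 x)) : ∀ᶠ i in l, u i = x := by
  have h' : Tendsto (fun i ↦ (⟨u i, hu i⟩ : Subtype p)) l (𝓝 ⟨x, hx⟩) := tendsto_subtype_rng.2 h
  rw [nhds_discrete, tendsto_pure] at h'
  exact h'.mono fun i hi ↦ congrArg Subtype.val hi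

lemma le_max_inv_one_sub_of_le_one_add_mul {x : ℕ → ℝ} {r : ℝ} (hr₀ : 0 ≤ r) (hr₁ : r < 1)
    (h : ∀ n, x (n + 1) ≤ 1 + r * x n) (n : ℕ) : x n ≤ max (x 0) (1 - r)⁻¹ := by
  induction n with
  | zero => exact le_max_left _ _
  | succ n ih =>
    have hM : 1 ≤ (1 - r) * max (x 0) (1 - r)⁻¹ :=
      (inv_le_iff_one_le_mul₀' (sub_pos.2 hr₁)).1 (le_max_right _ _)
    nlinarith [h n]

lemma isInducing_coe_SL :
    Topology.IsInducing (fun g : SL(2, ℂ) ↦ (g : Matrix (Fin 2) (Fin 2) ℂ)) :=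
  ⟨rfl⟩

lemma coe_shimizuA : (shimizuA : Matrix (Fin 2) (Fin 2) ℂ) = !![1, 1; 0, 1] := rfl

lemma coe_mul_shimizuA_mul_inv (g : SL(2, ℂ)) :
    ((g * shimizuA * g⁻¹ : SL(2, ℂ)) : Matrix (Fin 2) (Fin 2) ℂ) =
      !![1 - g 0 0 * g 1 0, g 0 0 ^ 2; -g 1 0 ^ 2, 1 + g 0 0 * g 1 0] := by
  have hdet : g 0 0 * g 1 1 - g 0 1 * g 1 0 = 1 :=
    det_fin_two (g : Matrix (Fin 2) (Fin 2) ℂ) ▸ g.det_coe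
  rw [Matrix.SpecialLinearGroup.coe_mul, Matrix.SpecialLinearGroup.coe_mul,
    Matrix.SpecialLinearGroup.coe_inv, coe_shimizuA, adjugate_fin_two]
  ext i j
  fin_cases i <;> fin_cases j <;> simp [mul_apply, Fin.sum_univ_two]
  exacts [by linear_combination hdet, by ring, by ring, by linear_combination hdet]

noncomputable def shimizuSeq (B : SL(2, ℂ)) : ℕ → SL(2, ℂ)
  | 0 => B
  | n + 1 => shimizuSeq B n * shimizuA * (shimizuSeq B n)⁻¹

namespace shimizuSeq

lemma mem {Γ : Subgroup SL(2, ℂ)} (hA : shimizuA ∈ Γ) {B : SL(2, ℂ)} (hB : B ∈ Γ) :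
    ∀ n, shimizuSeq B n ∈ Γ
  | 0 => hB
  | n + 1 => Γ.mul_mem (Γ.mul_mem (mem hA hB n) hA) (Γ.inv_mem (mem hA hB n))

variable (B : SL(2, ℂ)) (n : ℕ)

lemma coe_succ : (shimizuSeq B (n + 1) : Matrix (Fin 2) (Fin 2) ℂ) =
    !![1 - shimizuSeq B n 0 0 * shimizuSeq B n 1 0, shimizuSeq B n 0 0 ^ 2;
      -shimizuSeq B n 1 0 ^ 2, 1 + shimizuSeq B n 0 0 * shimizuSeq B n 1 0] :=
  coe_mul_shimizuA_mul_inv _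

lemma succ_apply_zero_zero :
    shimizuSeq B (n + 1) 0 0 = 1 - shimizuSeq B n 0 0 * shimizuSeq B n 1 0 :=
  congrFun₂ (coe_succ B n) 0 0

lemma succ_apply_one_zero : shimizuSeq B (n + 1) 1 0 = -shimizuSeq B n 1 0 ^ 2 :=
  congrFun₂ (coe_succ B n) 1 0

lemma norm_apply_one_zero : ‖shimizuSeq B n 1 0‖ = ‖B 1 0‖ ^ 2 ^ n := by
  induction n with
  | zero => rw [pow_zero, pow_one]; rfl
  | succ n ih => rw [succ_apply_one_zero, norm_neg, norm_pow, ih, ← pow_mul, ← pow_succ]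

variable {B}

lemma tendsto_apply_one_zero (hB : ‖B 1 0‖ < 1) :
    Tendsto (fun n ↦ shimizuSeq B n 1 0) atTop (𝓝 0) := by
  refine tendsto_zero_iff_norm_tendsto_zero.2 ?_
  simp_rw [norm_apply_one_zero]
  exact (tendsto_pow_atTop_nhds_zero_of_lt_one (norm_nonneg _) hB).comp
    (tendsto_pow_atTop_atTop_of_one_lt one_lt_two)

lemma norm_apply_zero_zero_le (hB : ‖B 1 0‖ < 1) :
    ‖shimizuSeq B n 0 0‖ ≤ max ‖B 0 0‖ (1 - ‖B 1 0‖)⁻¹ := by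
  refine le_max_inv_one_sub_of_le_one_add_mul (x := fun n ↦ ‖shimizuSeq B n 0 0‖)
    (norm_nonneg _) hB (fun n ↦ ?_) n
  calc ‖shimizuSeq B (n + 1) 0 0‖
      ≤ 1 + ‖shimizuSeq B n 1 0‖ * ‖shimizuSeq B n 0 0‖ := by
        rw [succ_apply_zero_zero, mul_comm, ← norm_mul]
        exact (norm_sub_le _ _).trans_eq (by rw [norm_one])
    _ ≤ 1 + ‖B 1 0‖ * ‖shimizuSeq B n 0 0‖ := by
        rw [norm_apply_one_zero]
        gcongr
        exact pow_le_of_le_one (norm_nonneg _) hB.le (by positivity)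

lemma tendsto_apply_zero_zero (hB : ‖B 1 0‖ < 1) :
    Tendsto (fun n ↦ shimizuSeq B n 0 0) atTop (𝓝 1) := by
  have hac : Tendsto (fun n ↦ shimizuSeq B n 0 0 * shimizuSeq B n 1 0) atTop (𝓝 0) := by
    have hbound := (tendsto_apply_one_zero hB).norm.const_mul (max ‖B 0 0‖ (1 - ‖B 1 0‖)⁻¹)
    rw [norm_zero, mul_zero] at hbound
    refine squeeze_zero_norm (fun n ↦ ?_) hbound
    rw [norm_mul]
    exact mul_le_mul_of_nonneg_right (norm_apply_zero_zero_le n hB) (norm_nonneg _)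
  refine (tendsto_add_atTop_iff_nat 1).1 ?_
  have h := (tendsto_const_nhds (x := (1 : ℂ)) (f := atTop)).sub hac
  simpa only [succ_apply_zero_zero, sub_zero] using h

lemma tendsto_succ (hB : ‖B 1 0‖ < 1) :
    Tendsto (fun n ↦ shimizuSeq B (n + 1)) atTop (𝓝 shimizuA) := by
  have hcont : Continuous fun p : ℂ × ℂ ↦ !![1 - p.1 * p.2, p.1 ^ 2; -p.2 ^ 2, 1 + p.1 * p.2] := by
    refine continuous_matrix fun i j ↦ ?_
    fin_cases i <;> fin_cases j <;> simp <;> fun_prop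
  rw [isInducing_coe_SL.tendsto_nhds_iff, coe_shimizuA]
  simpa [Function.comp_def, coe_succ] using (hcont.tendsto (1, 0)).comp
    ((tendsto_apply_zero_zero hB).prodMk_nhds (tendsto_apply_one_zero hB))

end shimizuSeq

/-- Shimizu's lemma: if `Γ ≤ SL(2,ℂ)` is discrete and contains `[[1,1],[0,1]]`,
then any `B = [[a,b],[c,d]] ∈ Γ` with `c ≠ 0` satisfies `|c| ≥ 1`. -/
theorem shimizu_lemma (Γ : Subgroup (Matrix.SpecialLinearGroup (Fin 2) ℂ))
    (hΓ : DiscreteTopology Γ) (hA : shimizuA ∈ Γ)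
    (B : Matrix.SpecialLinearGroup (Fin 2) ℂ) (hB : B ∈ Γ)
    (hc : (B : Matrix (Fin 2) (Fin 2) ℂ) 1 0 ≠ 0) :
    1 ≤ ‖(B : Matrix (Fin 2) (Fin 2) ℂ) 1 0‖ := by
  by_contra! hlt
  obtain ⟨n, hn⟩ := ((shimizuSeq.tendsto_succ hlt).eventually_eq_of_discreteTopology
    (fun n ↦ shimizuSeq.mem hA hB (n + 1)) hA).exists
  have hzero : shimizuSeq B (n + 1) 1 0 = 0 := by rw [hn]; rfl
  rw [← norm_eq_zero, shimizuSeq.norm_apply_one_zero] at hzero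
  exact hc (norm_eq_zero.1 (pow_eq_zero_iff (by positivity) |>.1 hzero))
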